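/- On a weak almost para-S-manifold, the ker f-component of the tensor N^{(1)} satisfies (N^{(1)}(X,Y))^⊥ = 2 g(X, f Q̃ Y) ξ̄, where ξ̄ = Σ_i ξ_i and Q̃ = Q - id. -/

import Mathlib

open scoped BigOperators

noncomputable section

variable (C V : Type*) [CommRing C] [Algebra ℝ C] [AddCommGroup V]
  [Module ℝ V] [Module C V] [IsScalarTower ℝ C V]

/-- A metric weak para-f-structure on a manifold, modelled algebraically:
`C` plays the role of the ring of smooth functions, `V` the `C`-module of vector fields
with Lie bracket `b` and derivation action `act` of vector fields on functions,
`g` is a compatible pseudo-Riemannian metric (with `f` of rank `2n`, encoded by `hrank`)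
and `nabla` its Levi-Civita connection (torsion-free and metric). -/
structure MWPF (p : ℕ) where
  f : V →ₗ[C] V
  Q : V →ₗ[C] V
  ξ : Fin p → V
  η : Fin p → V →ₗ[C] C
  g : V →ₗ[C] V →ₗ[C] C
  b : V → V → V
  act : V → C → C
  nabla : V → V → V
  hQbij : Function.Bijective Q
  hf2 : ∀ X, f (f X) = Q X - ∑ i, η i X • ξ i
  hf3 : ∀ X, f (f (f X)) = f (Q X)
  hetaxi : ∀ i j, η i (ξ j) = if i = j then (1 : C) else 0
  hQxi : ∀ i, Q (ξ i) = ξ i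
  hrange : ∀ X : V, X ∈ LinearMap.range f ↔ ∀ i, η i X = 0
  hgsymm : ∀ X Y, g X Y = g Y X
  hgnondeg : ∀ X, (∀ Y, g X Y = 0) → X = 0
  hrank : ∀ Z, (∀ i, η i Z = 0) → (∀ Y, g Z (f Y) = 0) → Z = 0
  hgcompat : ∀ X Y, g (f X) (f Y) = -(g X (Q Y)) + ∑ i, η i X * η i Y
  hbskew : ∀ X Y, b X Y = - b Y X
  hbaddl : ∀ X Y Z, b (X + Y) Z = b X Z + b Y Z
  hjacobi : ∀ X Y Z, b X (b Y Z) + b Y (b Z X) + b Z (b X Y) = 0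
  hactadd : ∀ X a c, act X (a + c) = act X a + act X c
  hactmul : ∀ X a c, act X (a * c) = act X a * c + a * act X c
  hactX : ∀ (a : C) X Y c, act (a • X + Y) c = a * act X c + act Y c
  hbleib : ∀ X (a : C) Y, b X (a • Y) = act X a • Y + a • b X Y
  hnab1 : ∀ (a : C) X X' Y, nabla (a • X + X') Y = a • nabla X Y + nabla X' Y
  hnabadd : ∀ X Y Z, nabla X (Y + Z) = nabla X Y + nabla X Z
  hnableib : ∀ X (a : C) Y, nabla X (a • Y) = act X a • Y + a • nabla X Y
  htors : ∀ X Y, nabla X Y - nabla Y X = b X Y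
  hmetric : ∀ X Y Z, act X (g Y Z) = g (nabla X Y) Z + g Y (nabla X Z)

namespace MWPF

variable {C V} {p : ℕ} (s : MWPF C V p)

/-- The fundamental 2-form `Φ(X,Y) = g(X, fY)`. -/
def Phi (X Y : V) : C := s.g X (s.f Y)

/-- `dη^i(X,Y) = (1/2)(X(η^i Y) - Y(η^i X) - η^i [X,Y])`. -/
def dEta (i : Fin p) (X Y : V) : C :=
  (2⁻¹ : ℝ) • (s.act X (s.η i Y) - s.act Y (s.η i X) - s.η i (s.b X Y))

/-- The Nijenhuis torsion `[f,f]`. -/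
def Nij (X Y : V) : V :=
  s.f (s.f (s.b X Y)) + s.b (s.f X) (s.f Y) - s.f (s.b (s.f X) Y) - s.f (s.b X (s.f Y))

/-- `N^(1)(X,Y) = [f,f](X,Y) - 2 Σ_i dη^i(X,Y) ξ_i`. -/
def N1 (X Y : V) : V := s.Nij X Y - (2 : ℝ) • ∑ i, s.dEta i X Y • s.ξ i

/-- The difference tensor `Q̃ = Q - id`. -/
def Qt (X : V) : V := s.Q X - X

/-- The Lie derivative of `f`: `(£_Z f)X = [Z, fX] - f[Z,X]`. -/
def Lief (Z X : V) : V := s.b Z (s.f X) - s.f (s.b Z X)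

/-- The Lie derivative of `g`: `(£_Z g)(X,Y) = Z(g(X,Y)) - g([Z,X],Y) - g(X,[Z,Y])`. -/
def Lieg (Z X Y : V) : C := s.act Z (s.g X Y) - s.g (s.b Z X) Y - s.g X (s.b Z Y)

/-- `N^(2)_i(X,Y) = (£_{fX} η^i)Y - (£_{fY} η^i)X`. -/
def N2 (i : Fin p) (X Y : V) : C :=
  (s.act (s.f X) (s.η i Y) - s.η i (s.b (s.f X) Y))
    - (s.act (s.f Y) (s.η i X) - s.η i (s.b (s.f Y) X))

/-- The exterior differential of the fundamental 2-form. -/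
def dPhi (X Y Z : V) : C := (3⁻¹ : ℝ) •
  (s.act X (s.Phi Y Z) + s.act Y (s.Phi Z X) + s.act Z (s.Phi X Y)
    - s.Phi (s.b X Y) Z - s.Phi (s.b Z X) Y - s.Phi (s.b Y Z) X)

/-- The tensor `h_i = (1/2) £_{ξ_i} f`. -/
def hmap (i : Fin p) (X : V) : V := (2⁻¹ : ℝ) • s.Lief (s.ξ i) X

/-- The tensor `N^(5)`. -/
def N5 (X Y Z : V) : C :=
  s.act (s.f Z) (s.g X (s.Qt Y)) - s.act (s.f Y) (s.g X (s.Qt Z))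
    + s.g (s.b X (s.f Z)) (s.Qt Y) - s.g (s.b X (s.f Y)) (s.Qt Z)
    + s.g (s.b Y (s.f Z) - s.b Z (s.f Y) - s.f (s.b Y Z)) (s.Qt X)

/-- The curvature tensor of `nabla`. -/
def Rm (X Y Z : V) : V :=
  s.nabla X (s.nabla Y Z) - s.nabla Y (s.nabla X Z) - s.nabla (s.b X Y) Z

end MWPF

/-!
Every `η^i` vanishes on the image of `f`, so under `η^i` only the term `[fX, fY]` of `[f, f](X, Y)`
survives, and `dη^i(fX, fY) = -½ η^i[fX, fY]`. The para-S condition turns the latter into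
`Φ(fX, fY) = g(fX, f²Y) = -g(X, fQY)` (compatibility of `g`, and `Qf = fQ`), while the correction term
contributes `-2 dη^i(X, Y) = -2 g(X, fY)`. Hence `η^i(N^(1)(X, Y)) = 2 g(X, f Q̃ Y)` for every `i`.
-/

namespace MWPF

section

variable {C V : Type*} [CommRing C] [AddCommGroup V] [Module C V] {p : ℕ} (s : MWPF C V p)

theorem act_zero (Z : V) : s.act Z 0 = 0 := by
  simpa using (s.hactadd Z 0 0).symm

theorem eta_f (i : Fin p) (Z : V) : s.η i (s.f Z) = 0 :=
  (s.hrange (s.f Z)).mp ⟨Z, rfl⟩ i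

theorem eta_sum_smul_xi (i : Fin p) (c : Fin p → C) :
    s.η i (∑ j, c j • s.ξ j) = c i := by
  simp [map_sum, s.hetaxi]

theorem Q_f_comm (Z : V) : s.Q (s.f Z) = s.f (s.Q Z) := by
  rw [← s.hf3, s.hf2 (s.f Z)]
  simp [s.eta_f]

theorem g_f_f_f (X Y : V) : s.g (s.f X) (s.f (s.f Y)) = -s.g X (s.f (s.Q Y)) := by
  rw [s.hgcompat, s.Q_f_comm]
  simp [s.eta_f]

theorem eta_Nij (i : Fin p) (X Y : V) :
    s.η i (s.Nij X Y) = s.η i (s.b (s.f X) (s.f Y)) := by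
  simp [Nij, s.eta_f]

variable [Algebra ℝ C]

theorem dEta_f_f (i : Fin p) (X Y : V) :
    s.dEta i (s.f X) (s.f Y) = -((2⁻¹ : ℝ) • s.η i (s.b (s.f X) (s.f Y))) := by
  simp [dEta, s.eta_f, s.act_zero]

def IsWeakAlmostParaS : Prop := ∀ (i : Fin p) (X Y : V), s.dEta i X Y = s.Phi X Y

theorem IsWeakAlmostParaS.eta_bracket_f_f (hS : s.IsWeakAlmostParaS) (i : Fin p) (X Y : V) :
    s.η i (s.b (s.f X) (s.f Y)) = (2 : ℝ) • s.g X (s.f (s.Q Y)) := by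
  have h := hS i (s.f X) (s.f Y)
  rw [s.dEta_f_f, Phi, s.g_f_f_f, neg_inj] at h
  rw [← h, smul_smul]
  norm_num

variable [Module ℝ V] [IsScalarTower ℝ C V]

theorem eta_N1 (i : Fin p) (X Y : V) :
    s.η i (s.N1 X Y) = s.η i (s.Nij X Y) - (2 : ℝ) • s.dEta i X Y := by
  rw [N1, map_sub, LinearMap.map_smul_of_tower, s.eta_sum_smul_xi]

theorem IsWeakAlmostParaS.eta_N1 (hS : s.IsWeakAlmostParaS) (i : Fin p) (X Y : V) :
    s.η i (s.N1 X Y) = (2 : ℝ) • s.g X (s.f (s.Qt Y)) := by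
  rw [s.eta_N1, s.eta_Nij, hS.eta_bracket_f_f, hS, Phi, Qt, map_sub, map_sub, smul_sub]

end

end MWPF

/-- on a weak almost para-S-manifold, the `ker f`-component of `N^(1)`
satisfies `(N^(1)(X,Y))^⊥ = 2 g(X, f Q̃ Y) ξ̄`, where `ξ̄ = Σ_i ξ_i`. -/
theorem paraS_N1_perp {C V : Type*} [CommRing C] [Algebra ℝ C] [AddCommGroup V]
    [Module ℝ V] [Module C V] [IsScalarTower ℝ C V] {p : ℕ} (s : MWPF C V p)
    (hS : ∀ (i : Fin p) (X Y : V), s.dEta i X Y = s.Phi X Y) :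
    ∀ X Y : V, (∑ i, s.η i (s.N1 X Y) • s.ξ i)
      = (2 : ℝ) • (s.g X (s.f (s.Qt Y)) • ∑ i, s.ξ i) := by
  intro X Y
  have hN1 : ∀ i, s.η i (s.N1 X Y) = (2 : ℝ) • s.g X (s.f (s.Qt Y)) :=
    fun i => MWPF.IsWeakAlmostParaS.eta_N1 s hS i X Y
  simp only [hN1, ← Finset.smul_sum, smul_assoc]
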